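/- Define ϱ : ℝ³ → ℝ by ϱ(x) = ℓ(x)^{−1/2} for ℓ(x) ≤ 1 and ϱ(x) = ℓ(x)^{−2} for ℓ(x) ≥ 1, where ℓ(x) = |x|. Then the function (x,y) ↦ ϱ(x)²ϱ(y)² ℓ(x)⁻¹ ℓ(y)⁻¹ |x−y|⁻¹ is integrable on ℝ³ × ℝ³. -/

import Mathlib

open MeasureTheory Real
open scoped ENNReal

noncomputable abbrev E3 := EuclideanSpace ℝ (Fin 3)

/-- ϱ(x) = |x|^{−1/2} for |x| ≤ 1 and |x|^{−2} for |x| ≥ 1. -/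
noncomputable def varrho (x : E3) : ℝ :=
  if ‖x‖ ≤ 1 then ‖x‖ ^ (-(1:ℝ)/2) else ‖x‖ ^ (-(2:ℝ))

namespace Stmt19Aux

open Metric Set

lemma finrank_E3 : Module.finrank ℝ E3 = 3 := by
  simp [finrank_euclideanSpace]

/-- `‖x‖^(-r)` is integrable on the unit ball of `ℝ³` when `0 < r < 3`. -/
lemma integrableOn_ball_rpow {r : ℝ} (h0 : 0 < r) (h3 : r < 3) :
    IntegrableOn (fun x : E3 => ‖x‖ ^ (-r)) (ball (0:E3) 1) := by
  have hmeas : Measurable fun x : E3 => ‖x‖ ^ (-r) := by fun_prop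
  have hnn : ∀ x : E3, 0 ≤ ‖x‖ ^ (-r) := fun x => rpow_nonneg (norm_nonneg x) _
  set μ : Measure E3 := volume.restrict (ball (0:E3) 1) with hμ
  refine ⟨hmeas.aestronglyMeasurable, ?_⟩
  rw [HasFiniteIntegral, lintegral_enorm_of_nonneg hnn,
    lintegral_eq_lintegral_meas_le μ (ae_of_all _ hnn) hmeas.aemeasurable]
  have hsub : ∀ t : ℝ, 0 < t →
      {a : E3 | t ≤ ‖a‖ ^ (-r)} ⊆ closedBall 0 (t ^ (-r⁻¹)) := by
    intro t ht a ha
    simp only [mem_setOf_eq] at ha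
    rcases eq_or_ne a 0 with rfl | h0a
    · rw [norm_zero, zero_rpow (by simp [h0.ne'] : -r ≠ 0)] at ha
      exact absurd (ht.trans_le ha) (lt_irrefl 0)
    · have hna : 0 < ‖a‖ := norm_pos_iff.mpr h0a
      rw [mem_closedBall_zero_iff]
      calc ‖a‖ = (‖a‖ ^ (-r)) ^ (-r⁻¹) := by
            rw [← rpow_mul (norm_nonneg a)]
            rw [show -r * -r⁻¹ = r * r⁻¹ by ring, mul_inv_cancel₀ h0.ne', rpow_one]
        _ ≤ t ^ (-r⁻¹) := rpow_le_rpow_of_nonpos ht ha (neg_nonpos.mpr (inv_nonneg.mpr h0.le))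
  calc ∫⁻ t in Ioi (0:ℝ), μ {a | t ≤ ‖a‖ ^ (-r)}
      ≤ ∫⁻ t in Ioc (0:ℝ) 1 ∪ Ioi 1, μ {a | t ≤ ‖a‖ ^ (-r)} :=
        lintegral_mono_set Ioi_subset_Ioc_union_Ioi
    _ ≤ (∫⁻ t in Ioc (0:ℝ) 1, μ {a | t ≤ ‖a‖ ^ (-r)})
        + ∫⁻ t in Ioi (1:ℝ), μ {a | t ≤ ‖a‖ ^ (-r)} := lintegral_union_le _ _ _
    _ < ∞ := by
        refine ENNReal.add_lt_top.2 ⟨?_, ?_⟩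
        · calc (∫⁻ t in Ioc (0:ℝ) 1, μ {a | t ≤ ‖a‖ ^ (-r)})
              ≤ ∫⁻ _ in Ioc (0:ℝ) 1, volume (ball (0:E3) 1) := by
                refine setLIntegral_mono' measurableSet_Ioc fun t _ => ?_
                calc μ {a | t ≤ ‖a‖ ^ (-r)} ≤ μ univ := measure_mono (subset_univ _)
                  _ ≤ volume (ball (0:E3) 1) := by
                      rw [hμ, Measure.restrict_apply_univ]
            _ = volume (ball (0:E3) 1) * volume (Ioc (0:ℝ) 1) := setLIntegral_const _ _
            _ < ∞ := ENNReal.mul_lt_top measure_ball_lt_top (by simp)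
        · have hb : ∀ t ∈ Ioi (1:ℝ), μ {a | t ≤ ‖a‖ ^ (-r)}
              ≤ ENNReal.ofReal (t ^ (-(3/r))) * volume (ball (0:E3) 1) := by
            intro t ht
            have ht0 : (0:ℝ) < t := lt_trans one_pos ht
            have h1 : μ {a | t ≤ ‖a‖ ^ (-r)} ≤ volume (closedBall (0:E3) (t ^ (-r⁻¹))) :=
              le_trans (Measure.restrict_le_self _) (measure_mono (hsub t ht0))
            have h2 : volume (closedBall (0:E3) (t ^ (-r⁻¹)))
                = ENNReal.ofReal ((t ^ (-r⁻¹)) ^ Module.finrank ℝ E3)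
                  * volume (ball (0:E3) 1) :=
              Measure.addHaar_closedBall _ _ (rpow_nonneg ht0.le _)
            rw [h2, finrank_E3] at h1
            refine h1.trans_eq ?_
            have h6 : (t ^ (-r⁻¹)) ^ (3:ℕ) = t ^ (-(3/r)) := by
              rw [← rpow_natCast (t ^ (-r⁻¹)) 3, ← rpow_mul ht0.le]
              congr 1
              push_cast
              ring
            rw [h6]
          calc (∫⁻ t in Ioi (1:ℝ), μ {a | t ≤ ‖a‖ ^ (-r)})
              ≤ ∫⁻ t in Ioi (1:ℝ),
                  ENNReal.ofReal (t ^ (-(3/r))) * volume (ball (0:E3) 1) :=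
                setLIntegral_mono' measurableSet_Ioi hb
            _ = (∫⁻ t in Ioi (1:ℝ), ENNReal.ofReal (t ^ (-(3/r))))
                * volume (ball (0:E3) 1) :=
                lintegral_mul_const' _ _ measure_ball_lt_top.ne
            _ < ∞ := by
                refine ENNReal.mul_lt_top ?_ measure_ball_lt_top
                refine IntegrableOn.setLIntegral_lt_top ?_
                refine integrableOn_Ioi_rpow_of_lt ?_ one_pos
                rw [neg_lt_neg_iff]
                exact (one_lt_div h0).2 h3

/-- `‖x‖^(-s)` is integrable outside the unit ball of `ℝ³` when `s > 3`. -/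
lemma integrableOn_compl_rpow {s : ℝ} (h3 : 3 < s) :
    IntegrableOn (fun x : E3 => ‖x‖ ^ (-s)) (ball (0:E3) 1)ᶜ := by
  have hs0 : (0:ℝ) < s := by linarith
  have hnr : (Module.finrank ℝ E3 : ℝ) < s := by
    rw [finrank_E3]; exact_mod_cast h3
  have hint : Integrable (fun x : E3 => (2:ℝ) ^ s * (1 + ‖x‖) ^ (-s)) :=
    (integrable_one_add_norm hnr).const_mul _
  refine Integrable.mono' hint.integrableOn
    (by fun_prop : Measurable fun x : E3 => ‖x‖ ^ (-s)).aestronglyMeasurable ?_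
  filter_upwards [ae_restrict_mem measurableSet_ball.compl] with x hx
  have h1 : (1:ℝ) ≤ ‖x‖ := by
    have := hx
    simp only [mem_compl_iff, mem_ball, dist_zero_right, not_lt] at this
    exact this
  have hxpos : (0:ℝ) < ‖x‖ := lt_of_lt_of_le one_pos h1
  rw [Real.norm_of_nonneg (rpow_nonneg (norm_nonneg x) _)]
  have h2 : 1 + ‖x‖ ≤ 2 * ‖x‖ := by linarith
  have h3' : (2 * ‖x‖) ^ (-s) ≤ (1 + ‖x‖) ^ (-s) :=
    rpow_le_rpow_of_nonpos (by positivity) h2 (by linarith)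
  have h4 : (2 * ‖x‖) ^ (-s) = 2 ^ (-s) * ‖x‖ ^ (-s) :=
    mul_rpow (by norm_num) (norm_nonneg x)
  have h5 : ‖x‖ ^ (-s) = 2 ^ s * (2 * ‖x‖) ^ (-s) := by
    rw [h4, ← mul_assoc, ← rpow_add (by norm_num : (0:ℝ) < 2)]
    simp
  rw [h5]
  have : (0:ℝ) ≤ (2:ℝ) ^ s := by positivity
  calc (2:ℝ) ^ s * (2 * ‖x‖) ^ (-s) ≤ 2 ^ s * (1 + ‖x‖) ^ (-s) := by
        exact mul_le_mul_of_nonneg_left h3' this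
    _ = 2 ^ s * (1 + ‖x‖) ^ (-s) := rfl

/-- A nonnegative measurable function bounded by `c‖x‖^(-r)` inside the unit ball
and by `c‖x‖^(-s)` outside (with `0 < r < 3 < s`) is integrable on `ℝ³`. -/
lemma integrable_of_bounds {f : E3 → ℝ} (hf : Measurable f) (hnn : ∀ x, 0 ≤ f x)
    {c r s : ℝ} (hr0 : 0 < r) (hr3 : r < 3) (hs : 3 < s)
    (hball : ∀ x : E3, ‖x‖ ≤ 1 → f x ≤ c * ‖x‖ ^ (-r))
    (hout : ∀ x : E3, 1 ≤ ‖x‖ → f x ≤ c * ‖x‖ ^ (-s)) :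
    Integrable f := by
  rw [← integrableOn_univ, ← union_compl_self (ball (0:E3) 1)]
  refine IntegrableOn.union ?_ ?_
  · refine Integrable.mono' ((integrableOn_ball_rpow hr0 hr3).const_mul c)
      hf.aestronglyMeasurable.restrict ?_
    filter_upwards [ae_restrict_mem measurableSet_ball] with x hx
    rw [Real.norm_of_nonneg (hnn x)]
    refine hball x ?_
    exact (mem_ball_zero_iff.mp hx).le
  · refine Integrable.mono' ((integrableOn_compl_rpow hs).const_mul c)
      hf.aestronglyMeasurable.restrict ?_
    filter_upwards [ae_restrict_mem measurableSet_ball.compl] with x hx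
    rw [Real.norm_of_nonneg (hnn x)]
    refine hout x ?_
    simpa [mem_compl_iff, mem_ball, dist_zero_right] using hx

noncomputable def g (x : E3) : ℝ := varrho x ^ 2 * ‖x‖⁻¹

noncomputable def u (x : E3) : ℝ := g x ^ ((4:ℝ)/3)

noncomputable def v (x : E3) : ℝ := g x ^ ((2:ℝ)/3)

noncomputable def A (x : E3) : ℝ := if ‖x‖ ≤ 1 then ‖x‖ ^ (-((8:ℝ)/3)) else 0

noncomputable def B (x : E3) : ℝ := if ‖x‖ ≤ 1 then ‖x‖ ^ (-(2:ℝ)) + ‖x‖⁻¹ else 0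

lemma varrho_nonneg (x : E3) : 0 ≤ varrho x := by
  unfold varrho; split <;> exact rpow_nonneg (norm_nonneg x) _

lemma g_nonneg (x : E3) : 0 ≤ g x :=
  mul_nonneg (pow_nonneg (varrho_nonneg x) 2) (inv_nonneg.2 (norm_nonneg x))

lemma u_nonneg (x : E3) : 0 ≤ u x := rpow_nonneg (g_nonneg x) _

lemma v_nonneg (x : E3) : 0 ≤ v x := rpow_nonneg (g_nonneg x) _

lemma A_nonneg (x : E3) : 0 ≤ A x := by
  unfold A; split
  · exact rpow_nonneg (norm_nonneg x) _
  · exact le_refl 0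

lemma B_nonneg (x : E3) : 0 ≤ B x := by
  unfold B; split
  · have := rpow_nonneg (norm_nonneg x) (-(2:ℝ))
    have := inv_nonneg.2 (norm_nonneg x)
    positivity
  · exact le_refl 0

lemma measurable_varrho : Measurable varrho := by
  unfold varrho
  exact Measurable.ite (measurableSet_le (by fun_prop) measurable_const)
    (by fun_prop) (by fun_prop)

lemma measurable_g : Measurable g := by
  have h := measurable_varrho
  unfold g
  fun_prop

lemma measurable_u : Measurable u := by
  have h := measurable_g
  unfold u
  fun_prop

lemma measurable_A : Measurable A := by
  unfold A
  exact Measurable.ite (measurableSet_le (by fun_prop) measurable_const)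
    (by fun_prop) measurable_const

lemma measurable_B : Measurable B := by
  unfold B
  exact Measurable.ite (measurableSet_le (by fun_prop) measurable_const)
    (by fun_prop) measurable_const

lemma g_ball {x : E3} (hx : ‖x‖ ≤ 1) : g x ≤ ‖x‖ ^ (-(2:ℝ)) := by
  rcases eq_or_ne x 0 with rfl | hx0
  · simp [g, varrho, zero_rpow]
  · have hpos : 0 < ‖x‖ := norm_pos_iff.mpr hx0
    unfold g varrho
    rw [if_pos hx]
    rw [← rpow_natCast (‖x‖ ^ (-(1:ℝ)/2)) 2, ← rpow_mul (norm_nonneg x),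
      ← rpow_neg_one ‖x‖, ← rpow_add hpos]
    apply le_of_eq
    norm_num

lemma g_out {x : E3} (hx : 1 ≤ ‖x‖) : g x ≤ ‖x‖ ^ (-(5:ℝ)) := by
  have hpos : 0 < ‖x‖ := lt_of_lt_of_le one_pos hx
  unfold g varrho
  rcases eq_or_lt_of_le hx with h1 | h1
  · rw [← h1]; norm_num
  · rw [if_neg (not_le.mpr h1)]
    rw [← rpow_natCast (‖x‖ ^ (-(2:ℝ))) 2, ← rpow_mul (norm_nonneg x),
      ← rpow_neg_one ‖x‖, ← rpow_add hpos]
    apply le_of_eq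
    norm_num

lemma u_ball {x : E3} (hx : ‖x‖ ≤ 1) : u x ≤ ‖x‖ ^ (-((8:ℝ)/3)) := by
  have := rpow_le_rpow (g_nonneg x) (g_ball hx) (by norm_num : (0:ℝ) ≤ 4/3)
  refine this.trans_eq ?_
  rw [← rpow_mul (norm_nonneg x)]
  norm_num

lemma u_out {x : E3} (hx : 1 ≤ ‖x‖) : u x ≤ ‖x‖ ^ (-((20:ℝ)/3)) := by
  have := rpow_le_rpow (g_nonneg x) (g_out hx) (by norm_num : (0:ℝ) ≤ 4/3)
  refine this.trans_eq ?_
  rw [← rpow_mul (norm_nonneg x)]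
  norm_num

lemma v_le (x : E3) : v x ≤ ‖x‖ ^ (-((4:ℝ)/3)) := by
  by_cases hx : ‖x‖ ≤ 1
  · have := rpow_le_rpow (g_nonneg x) (g_ball hx) (by norm_num : (0:ℝ) ≤ 2/3)
    refine this.trans ?_
    rw [← rpow_mul (norm_nonneg x)]
    norm_num
  · push_neg at hx
    have := rpow_le_rpow (g_nonneg x) (g_out hx.le) (by norm_num : (0:ℝ) ≤ 2/3)
    refine this.trans ?_
    rw [← rpow_mul (norm_nonneg x)]
    refine rpow_le_rpow_of_exponent_le hx.le (by norm_num)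

lemma integrable_g : Integrable g := by
  refine integrable_of_bounds measurable_g g_nonneg (c := 1)
    (two_pos) (by norm_num) (by norm_num : (3:ℝ) < 5) ?_ ?_
  · intro x hx; rw [one_mul]; exact g_ball hx
  · intro x hx; rw [one_mul]; exact g_out hx

lemma integrable_u : Integrable u := by
  refine integrable_of_bounds measurable_u u_nonneg (c := 1)
    (by norm_num : (0:ℝ) < 8/3) (by norm_num) (by norm_num : (3:ℝ) < 20/3) ?_ ?_
  · intro x hx; rw [one_mul]; exact u_ball hx
  · intro x hx; rw [one_mul]; exact u_out hx

lemma integrable_A : Integrable A := by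
  refine integrable_of_bounds measurable_A A_nonneg (c := 1)
    (by norm_num : (0:ℝ) < 8/3) (by norm_num) (by norm_num : (3:ℝ) < 4) ?_ ?_
  · intro x hx
    rw [one_mul]
    unfold A; rw [if_pos hx]
  · intro x hx
    rw [one_mul]
    unfold A
    split
    · have h1 : ‖x‖ = 1 := le_antisymm (by assumption) hx
      rw [h1]; norm_num
    · exact rpow_nonneg (norm_nonneg x) _

lemma integrable_B : Integrable B := by
  refine integrable_of_bounds measurable_B B_nonneg (c := 2)
    (by norm_num : (0:ℝ) < 2) (by norm_num) (by norm_num : (3:ℝ) < 4) ?_ ?_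
  · intro x hx
    unfold B; rw [if_pos hx]
    have hinv : ‖x‖⁻¹ ≤ ‖x‖ ^ (-(2:ℝ)) := by
      rcases eq_or_ne x 0 with rfl | hx0
      · simp [zero_rpow]
      · have hpos : 0 < ‖x‖ := norm_pos_iff.mpr hx0
        rw [← rpow_neg_one ‖x‖]
        exact rpow_le_rpow_of_exponent_ge hpos hx (by norm_num)
    linarith
  · intro x hx
    unfold B
    split
    · rcases lt_or_ge (1:ℝ) ‖x‖ with h | h
      · exact absurd (by assumption) (not_le.mpr h)
      · have h1 : ‖x‖ = 1 := le_antisymm (by assumption) hx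
        rw [h1]; norm_num
    · positivity

/-- AM–GM style inequality: `a*b ≤ a^{4/3} b^{2/3} + a^{2/3} b^{4/3}`. -/
lemma ab_le {a b : ℝ} (ha : 0 ≤ a) (hb : 0 ≤ b) :
    a * b ≤ a ^ ((4:ℝ)/3) * b ^ ((2:ℝ)/3) + a ^ ((2:ℝ)/3) * b ^ ((4:ℝ)/3) := by
  rcases eq_or_lt_of_le ha with rfl | ha'
  · simp only [zero_mul]
    positivity
  rcases eq_or_lt_of_le hb with rfl | hb'
  · simp only [mul_zero, zero_mul]
    positivity
  have key : ∀ p q : ℝ, 0 < p → 0 < q → p ≤ q →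
      p * q ≤ p ^ ((2:ℝ)/3) * q ^ ((4:ℝ)/3) := by
    intro p q hp hq hpq
    have h13 : p ^ ((1:ℝ)/3) ≤ q ^ ((1:ℝ)/3) := rpow_le_rpow hp.le hpq (by norm_num)
    calc p * q = p ^ ((2:ℝ)/3) * (p ^ ((1:ℝ)/3) * q) := by
          rw [← mul_assoc, ← rpow_add hp]
          norm_num
      _ ≤ p ^ ((2:ℝ)/3) * (q ^ ((1:ℝ)/3) * q) := by
          have : p ^ ((1:ℝ)/3) * q ≤ q ^ ((1:ℝ)/3) * q :=
            mul_le_mul_of_nonneg_right h13 hq.le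
          exact mul_le_mul_of_nonneg_left this (by positivity)
      _ = p ^ ((2:ℝ)/3) * q ^ ((4:ℝ)/3) := by
          rw [show q ^ ((1:ℝ)/3) * q = q ^ ((1:ℝ)/3) * q ^ (1:ℝ) by rw [rpow_one],
            ← rpow_add hq]
          norm_num
  rcases le_total a b with h | h
  · have := key a b ha' hb' h
    nlinarith [mul_nonneg (rpow_nonneg ha ((4:ℝ)/3)) (rpow_nonneg hb ((2:ℝ)/3))]
  · have := key b a hb' ha' h
    nlinarith [mul_nonneg (rpow_nonneg ha ((2:ℝ)/3)) (rpow_nonneg hb ((4:ℝ)/3))]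

/-- The core estimate `‖w‖^{-4/3} k(z) ≤ A w + B z` with `k(z) = ‖z‖⁻¹ 1_{‖z‖≤1}`. -/
lemma mk_le (w z : E3) :
    ‖w‖ ^ (-((4:ℝ)/3)) * (if ‖z‖ ≤ 1 then ‖z‖⁻¹ else 0) ≤ A w + B z := by
  by_cases hz : ‖z‖ ≤ 1
  · rw [if_pos hz]
    by_cases hw : ‖w‖ ≤ 1
    · -- use ab ≤ a² + b²
      set a := ‖w‖ ^ (-((4:ℝ)/3)) with hadef
      set b := ‖z‖⁻¹ with hbdef
      have ha : 0 ≤ a := rpow_nonneg (norm_nonneg w) _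
      have hb : 0 ≤ b := inv_nonneg.2 (norm_nonneg z)
      have h1 : a * b ≤ a ^ 2 + b ^ 2 := by nlinarith [sq_nonneg (a - b)]
      have h2 : a ^ 2 = ‖w‖ ^ (-((8:ℝ)/3)) := by
        rw [hadef, ← rpow_natCast (‖w‖ ^ (-((4:ℝ)/3))) 2, ← rpow_mul (norm_nonneg w)]
        norm_num
      have h3 : b ^ 2 ≤ B z := by
        unfold B
        rw [if_pos hz]
        have : b ^ 2 = ‖z‖ ^ (-(2:ℝ)) := by
          rw [hbdef, ← rpow_neg_one ‖z‖, ← rpow_natCast (‖z‖ ^ (-(1:ℝ))) 2,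
            ← rpow_mul (norm_nonneg z)]
          norm_num
        rw [this]
        have := inv_nonneg.2 (norm_nonneg z)
        linarith
      calc a * b ≤ a ^ 2 + b ^ 2 := h1
        _ ≤ A w + B z := by
            refine add_le_add ?_ h3
            unfold A
            rw [if_pos hw, h2]
    · -- ‖w‖ > 1 : the factor is ≤ 1
      push_neg at hw
      have h1 : ‖w‖ ^ (-((4:ℝ)/3)) ≤ 1 :=
        rpow_le_one_of_one_le_of_nonpos hw.le (by norm_num)
      have h2 : ‖w‖ ^ (-((4:ℝ)/3)) * ‖z‖⁻¹ ≤ ‖z‖⁻¹ :=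
        mul_le_of_le_one_left (inv_nonneg.2 (norm_nonneg z)) h1
      refine h2.trans ?_
      have h3 : ‖z‖⁻¹ ≤ B z := by
        unfold B
        rw [if_pos hz]
        have := rpow_nonneg (norm_nonneg z) (-(2:ℝ))
        linarith
      linarith [A_nonneg w]
  · rw [if_neg hz, mul_zero]
    exact add_nonneg (A_nonneg w) (B_nonneg z)

lemma B_swap (x y : E3) : B (y - x) = B (x - y) := by
  unfold B
  rw [norm_sub_rev]

/-- Key pointwise bound. -/
lemma key_bound (x y : E3) : g x * g y * ‖x - y‖⁻¹ ≤
    g x * g y + u x * A y + u x * B (x - y) + u y * A x + u y * B (x - y) := by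
  set k : ℝ := if ‖x - y‖ ≤ 1 then ‖x - y‖⁻¹ else 0 with hk
  have hk0 : 0 ≤ k := by
    rw [hk]; split
    · exact inv_nonneg.2 (norm_nonneg _)
    · exact le_refl 0
  have h1 : ‖x - y‖⁻¹ ≤ k + 1 := by
    rw [hk]; split
    · linarith [(le_refl ‖x - y‖⁻¹)]
    · push_neg at *
      have : ‖x - y‖⁻¹ ≤ 1 := by
        rename_i h
        rw [inv_le_one_iff₀]
        right; exact h.le
      linarith
  have hvyk : v y * k ≤ A y + B (x - y) := by
    refine le_trans (mul_le_mul_of_nonneg_right (v_le y) hk0) ?_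
    rw [hk]
    exact mk_le y (x - y)
  have hvxk : v x * k ≤ A x + B (x - y) := by
    refine le_trans (mul_le_mul_of_nonneg_right (v_le x) hk0) ?_
    rw [hk]
    exact mk_le x (x - y)
  have hgg : 0 ≤ g x * g y := mul_nonneg (g_nonneg x) (g_nonneg y)
  calc g x * g y * ‖x - y‖⁻¹ ≤ g x * g y * (k + 1) :=
        mul_le_mul_of_nonneg_left h1 hgg
    _ = g x * g y * k + g x * g y := by ring
    _ ≤ (u x * v y + v x * u y) * k + g x * g y := by
        refine add_le_add_left (mul_le_mul_of_nonneg_right ?_ hk0) _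
        exact ab_le (g_nonneg x) (g_nonneg y)
    _ = u x * (v y * k) + u y * (v x * k) + g x * g y := by ring
    _ ≤ u x * (A y + B (x - y)) + u y * (A x + B (x - y)) + g x * g y := by
        refine add_le_add_left (add_le_add ?_ ?_) _
        · exact mul_le_mul_of_nonneg_left hvyk (u_nonneg x)
        · exact mul_le_mul_of_nonneg_left hvxk (u_nonneg y)
    _ = g x * g y + u x * A y + u x * B (x - y) + u y * A x + u y * B (x - y) := by
        ring

end Stmt19Aux

open Stmt19Aux

/-- The function (x,y) ↦ ϱ(x)²ϱ(y)²ℓ(x)⁻¹ℓ(y)⁻¹|x−y|⁻¹ is integrable on ℝ³×ℝ³. -/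
theorem stmt_19 :
    Integrable (fun p : E3 × E3 =>
      varrho p.1 ^ 2 * varrho p.2 ^ 2 * ‖p.1‖⁻¹ * ‖p.2‖⁻¹ * ‖p.1 - p.2‖⁻¹) := by
  have T1 : Integrable (fun p : E3 × E3 => g p.1 * g p.2)
      ((volume : Measure E3).prod volume) := integrable_g.mul_prod integrable_g
  have T2 : Integrable (fun p : E3 × E3 => u p.1 * A p.2)
      ((volume : Measure E3).prod volume) := integrable_u.mul_prod integrable_A
  have T4 : Integrable (fun p : E3 × E3 => u p.2 * A p.1)
      ((volume : Measure E3).prod volume) := by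
    have h := integrable_A.mul_prod integrable_u
    refine h.congr ?_
    filter_upwards with p
    ring
  have T5 : Integrable (fun p : E3 × E3 => u p.2 * B (p.1 - p.2))
      ((volume : Measure E3).prod volume) := by
    have h := integrable_u.convolution_integrand (ContinuousLinearMap.mul ℝ ℝ) integrable_B
    simpa using h
  have T3 : Integrable (fun p : E3 × E3 => u p.1 * B (p.1 - p.2))
      ((volume : Measure E3).prod volume) := by
    have h := T5.swap
    have heq : ((fun p : E3 × E3 => u p.2 * B (p.1 - p.2)) ∘ Prod.swap)
        = fun p : E3 × E3 => u p.1 * B (p.1 - p.2) := by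
      funext p
      simp only [Function.comp_apply, Prod.fst_swap, Prod.snd_swap]
      rw [B_swap]
    rwa [heq] at h
  have hbound : Integrable (fun p : E3 × E3 =>
      g p.1 * g p.2 + u p.1 * A p.2 + u p.1 * B (p.1 - p.2)
        + u p.2 * A p.1 + u p.2 * B (p.1 - p.2))
      ((volume : Measure E3).prod volume) :=
    (((T1.add T2).add T3).add T4).add T5
  rw [Measure.volume_eq_prod]
  refine hbound.mono' ?_ ?_
  · have hv := measurable_varrho
    have : Measurable (fun p : E3 × E3 =>
        varrho p.1 ^ 2 * varrho p.2 ^ 2 * ‖p.1‖⁻¹ * ‖p.2‖⁻¹ * ‖p.1 - p.2‖⁻¹) := by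
      fun_prop
    exact this.aestronglyMeasurable
  · filter_upwards with p
    have hnn : 0 ≤ varrho p.1 ^ 2 * varrho p.2 ^ 2 * ‖p.1‖⁻¹ * ‖p.2‖⁻¹ * ‖p.1 - p.2‖⁻¹ := by
      have := varrho_nonneg p.1
      have := varrho_nonneg p.2
      positivity
    rw [Real.norm_of_nonneg hnn]
    have heq : varrho p.1 ^ 2 * varrho p.2 ^ 2 * ‖p.1‖⁻¹ * ‖p.2‖⁻¹ * ‖p.1 - p.2‖⁻¹
        = g p.1 * g p.2 * ‖p.1 - p.2‖⁻¹ := by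
      unfold g
      ring
    rw [heq]
    exact key_bound p.1 p.2
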